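/- For every integer k ≥ 2, the sequence {S(R_{2,3,…,k}(n))}_{n≥k} of exponential sums of the monomial rotation symmetric Boolean functions R_{2,3,…,k}(n) satisfies the homogeneous linear recurrence with integer coefficients whose characteristic polynomial is p_k(X) = X^k − 2(X^{k−2} + X^{k−3} + ⋯ + X + 1). -/

import Mathlib

open Finset

/-- Exponential sum of a Boolean function in `n` variables. -/
noncomputable def boolExpSum (n : ℕ) (F : (Fin n → ZMod 2) → ZMod 2) : ℤ :=
  ∑ x : Fin n → ZMod 2, (-1 : ℤ) ^ (F x).val

/-- Extension of a vector `x ∈ F₂ⁿ` to a function on `ℕ` (index `i` corresponds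
to the variable `X_{i+1}`; out-of-range indices give `0`). -/
def extVar {n : ℕ} (x : Fin n → ZMod 2) : ℕ → ZMod 2 :=
  fun i => if h : i < n then x ⟨i, h⟩ else 0

/-- The monomial rotation symmetric Boolean function
`R_{2,3,…,k}(n) = ∑_{i=1}^{n} X_i X_{i+1} ⋯ X_{i+k−1}` with cyclic indices mod `n`. -/
def rotMonomial (k n : ℕ) (x : Fin n → ZMod 2) : ZMod 2 :=
  ∑ i ∈ Finset.range n, ∏ l ∈ Finset.range k, extVar x ((i + l) % n)

namespace RotRec

/-- suffix product of the first `K` values, starting at `i` -/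
def SP (K : ℕ) (s : ℕ → ZMod 2) (i : ℕ) : ZMod 2 := ∏ p ∈ Finset.Ico i K, s p

/-- window product of length `K+1` starting at `i` -/
def wp (K : ℕ) (z : ℕ → ZMod 2) (i : ℕ) : ZMod 2 := ∏ l ∈ Finset.range (K+1), z (i+l)

/-- total sign of the first `q` windows -/
def wt (K q : ℕ) (z : ℕ → ZMod 2) : ℤ := ∏ i ∈ Finset.range q, (-1:ℤ)^(wp K z i).val

/-- concatenation `s ++ u ++ t` (boundaries of length `K`) -/
def glue (K m : ℕ) (s : ℕ → ZMod 2) (u : Fin m → ZMod 2) (t : ℕ → ZMod 2) : ℕ → ZMod 2 :=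
  fun p => if hp : p < K then s p else if hq : p - K < m then u ⟨p-K, hq⟩ else t (p-K-m)

/-- open chain sum with boundaries `s`, `t` -/
def W (K m : ℕ) (s t : ℕ → ZMod 2) : ℤ := ∑ u : Fin m → ZMod 2, wt K (m+K) (glue K m s u t)

def shiftb (K : ℕ) (b : ZMod 2) (s : ℕ → ZMod 2) : ℕ → ZMod 2 :=
  fun p => if p+1 < K then s (p+1) else b

def cap (K j : ℕ) : ℕ → ZMod 2 := fun p => if K - j ≤ p then 1 else 0

def rho (K : ℕ) (t : ℕ → ZMod 2) : ℕ :=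
  Nat.findGreatest (fun j => ∀ p ∈ Finset.Ico (K-j) K, t p = 1) K

lemma zmod2_eq_zero {a : ZMod 2} (h : a ≠ 1) : a = 0 := by revert a; decide

lemma neg_one_pow_add : ∀ a b : ZMod 2, (-1:ℤ)^((a+b).val) = (-1)^a.val * (-1)^b.val := by decide

lemma univ_zmod2 : (Finset.univ : Finset (ZMod 2)) = {0,1} := by decide

lemma SP_zero (K : ℕ) (s : ℕ → ZMod 2) : SP K s 0 = ∏ p ∈ Finset.range K, s p := by
  rw [SP, Finset.range_eq_Ico]

lemma SP_shiftb (K : ℕ) (hK : 1 ≤ K) (b : ZMod 2) (s : ℕ → ZMod 2) {i : ℕ} (hi : i < K) :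
    SP K (shiftb K b s) i = SP K s (i+1) * b := by
  obtain ⟨K', rfl⟩ : ∃ K', K = K'+1 := ⟨K-1, by omega⟩
  set K := K' + 1 with hKdef
  have hK1 : K - 1 = K' := by omega
  rw [SP, Finset.prod_Ico_succ_top (by omega : i ≤ K')]
  have e1 : ∀ p ∈ Finset.Ico i K', shiftb K b s p = s (p+1) := by
    intro p hp
    simp only [Finset.mem_Ico] at hp
    simp only [shiftb, if_pos (by omega : p + 1 < K)]
  rw [Finset.prod_congr rfl e1]
  have e2 : shiftb K b s K' = b := by
    simp only [shiftb, if_neg (by omega : ¬ K' + 1 < K)]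
  rw [e2, SP]
  congr 1
  rw [Finset.prod_Ico_eq_prod_range, Finset.prod_Ico_eq_prod_range]
  apply Finset.prod_congr (by congr 1 <;> omega)
  intro p _
  congr 1
  omega

lemma CP (K j : ℕ) {i : ℕ} (hi : i < K) :
    SP K (cap K j) i = if K - j ≤ i then 1 else 0 := by
  by_cases h : K - j ≤ i
  · rw [if_pos h]
    apply Finset.prod_eq_one
    intro p hp
    simp only [Finset.mem_Ico] at hp
    simp only [cap, if_pos (by omega : K - j ≤ p)]
  · rw [if_neg h]
    apply Finset.prod_eq_zero (i := K - j - 1)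
    · simp only [Finset.mem_Ico]; omega
    · simp only [cap, if_neg (by omega : ¬ K - j ≤ K - j - 1)]

lemma rho_le (K : ℕ) (t : ℕ → ZMod 2) : rho K t ≤ K := Nat.findGreatest_le K

lemma rho_spec (K : ℕ) (t : ℕ → ZMod 2) {i : ℕ} (hi : i < K) :
    SP K t i = SP K (cap K (rho K t)) i := by
  have hP0 : ∀ p ∈ Finset.Ico (K-0) K, t p = 1 := by
    intro p hp; simp only [Finset.mem_Ico] at hp; omega
  have hspec : ∀ p ∈ Finset.Ico (K - rho K t) K, t p = 1 :=
    Nat.findGreatest_spec (P := fun j => ∀ p ∈ Finset.Ico (K-j) K, t p = 1)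
      (Nat.zero_le K) hP0
  rw [CP K _ hi]
  by_cases h : K - rho K t ≤ i
  · rw [if_pos h]
    apply Finset.prod_eq_one
    intro p hp
    simp only [Finset.mem_Ico] at hp
    exact hspec p (by simp only [Finset.mem_Ico]; omega)
  · rw [if_neg h]
    -- there is a zero of t in [i, K)
    by_cases hz : ∃ p ∈ Finset.Ico i K, t p ≠ 1
    · obtain ⟨p, hp, hp1⟩ := hz
      exact Finset.prod_eq_zero hp (zmod2_eq_zero hp1)
    · exfalso
      push_neg at hz
      have hgt : rho K t < K - i := by omega
      have := Nat.findGreatest_is_greatest (P := fun j => ∀ p ∈ Finset.Ico (K-j) K, t p = 1)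
        hgt (by omega)
      apply this
      intro p hp
      simp only [Finset.mem_Ico] at hp
      exact hz p (by simp only [Finset.mem_Ico]; omega)


lemma wp_succ (K : ℕ) (z : ℕ → ZMod 2) (i : ℕ) :
    wp K z (i+1) = wp K (fun p => z (p+1)) i := by
  apply Finset.prod_congr rfl
  intro l _
  congr 1
  omega

lemma wt_succ (K q : ℕ) (z : ℕ → ZMod 2) :
    wt K (q+1) z = (-1:ℤ)^(wp K z 0).val * wt K q (fun p => z (p+1)) := by
  rw [wt, Finset.prod_range_succ']
  rw [mul_comm]
  congr 1
  apply Finset.prod_congr rfl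
  intro i _
  rw [wp_succ]

lemma glue_cons (K m : ℕ) (s : ℕ → ZMod 2) (b : ZMod 2) (v : Fin m → ZMod 2)
    (t : ℕ → ZMod 2) (p : ℕ) :
    glue K (m+1) s (Fin.cons b v) t (p+1) = glue K m (shiftb K b s) v t p := by
  simp only [glue, shiftb]
  by_cases h1 : p + 1 < K
  · rw [dif_pos h1, dif_pos (by omega : p < K), if_pos h1]
  · rw [dif_neg h1]
    by_cases h2 : p < K
    · -- p+1 = K, glue LHS hits u at index 0
      have hpK : p + 1 = K := by omega
      have h0 : p + 1 - K = 0 := by omega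
      rw [dif_pos (by omega : p + 1 - K < m + 1)]
      rw [dif_pos h2, if_neg h1]
      have : (⟨p+1-K, by omega⟩ : Fin (m+1)) = 0 := by ext; simp [h0]
      rw [this, Fin.cons_zero]
    · rw [dif_neg h2]
      by_cases h3 : p - K < m
      · rw [dif_pos (by omega : p + 1 - K < m + 1), dif_pos h3]
        have : (⟨p+1-K, by omega⟩ : Fin (m+1)) = Fin.succ ⟨p-K, h3⟩ := by
          ext; simp; omega
        rw [this, Fin.cons_succ]
      · rw [dif_neg (by omega : ¬ p + 1 - K < m + 1), dif_neg h3]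
        congr 1
        omega

lemma wp_glue_zero (K m : ℕ) (hK : 1 ≤ K) (s : ℕ → ZMod 2) (b : ZMod 2)
    (v : Fin m → ZMod 2) (t : ℕ → ZMod 2) :
    wp K (glue K (m+1) s (Fin.cons b v) t) 0 = SP K s 0 * b := by
  rw [wp, Finset.prod_range_succ, SP_zero]
  congr 1
  · apply Finset.prod_congr rfl
    intro l hl
    simp only [Finset.mem_range] at hl
    simp only [glue, zero_add]
    rw [dif_pos hl]
  · simp only [glue, zero_add]
    rw [dif_neg (by omega : ¬ K < K), dif_pos (by omega : K - K < m + 1)]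
    have : (⟨K-K, by omega⟩ : Fin (m+1)) = 0 := by ext; simp
    rw [this, Fin.cons_zero]

lemma W_peel (K m : ℕ) (hK : 1 ≤ K) (s t : ℕ → ZMod 2) :
    W K (m+1) s t =
      ∑ b : ZMod 2, (-1:ℤ)^((SP K s 0 * b).val) * W K m (shiftb K b s) t := by
  rw [W]
  rw [← (Fin.consEquiv (fun _ : Fin (m+1) => ZMod 2)).sum_comp]
  rw [Fintype.sum_prod_type]
  apply Finset.sum_congr rfl
  intro b _
  rw [W, Finset.mul_sum]
  apply Finset.sum_congr rfl
  intro v _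
  have hcons : (Fin.consEquiv (fun _ : Fin (m+1) => ZMod 2)) (b, v) = Fin.cons b v := by
    funext i
    induction i using Fin.cases <;> simp [Fin.consEquiv]
  rw [hcons]
  have : m + 1 + K = (m + K) + 1 := by omega
  rw [this, wt_succ, wp_glue_zero K m hK]
  congr 1
  apply Finset.prod_congr rfl
  intro i _
  congr 1
  congr 1
  apply Finset.prod_congr rfl
  intro l _
  exact glue_cons K m s b v t (i+l)

lemma W_inv (K : ℕ) (hK : 1 ≤ K) (m : ℕ) (s s' t : ℕ → ZMod 2)
    (H : ∀ i, i < K → SP K s i = SP K s' i) :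
    W K m s t = W K m s' t := by
  induction m generalizing s s' with
  | zero =>
    rw [W, W]
    apply Finset.sum_congr rfl
    intro u _
    rw [wt, wt]
    apply Finset.prod_congr rfl
    intro i hi
    simp only [Finset.mem_range, zero_add] at hi
    congr 1
    rw [wp, wp]
    have key : ∀ z : ℕ → ZMod 2,
        (∏ l ∈ Finset.range (K+1), glue K 0 z u t (i+l)) =
        SP K z i * ∏ p ∈ Finset.Ico K (i+K+1), t (p - K) := by
      intro z
      have e1 : ∏ l ∈ Finset.range (K+1), glue K 0 z u t (i+l)
          = ∏ p ∈ Finset.Ico i (i+(K+1)), glue K 0 z u t p := by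
        rw [Finset.prod_Ico_eq_prod_range]
        apply Finset.prod_congr (by congr 1; omega)
        intro l _
        congr 1
      rw [e1]
      rw [← Finset.prod_Ico_consecutive _ (by omega : i ≤ K) (by omega : K ≤ i+(K+1))]
      have e2 : i + (K+1) = i + K + 1 := by omega
      rw [e2]
      congr 1
      · apply Finset.prod_congr rfl
        intro p hp
        simp only [Finset.mem_Ico] at hp
        simp only [glue]
        rw [dif_pos hp.2]
      · apply Finset.prod_congr rfl
        intro p hp
        simp only [Finset.mem_Ico] at hp
        simp only [glue]
        rw [dif_neg (by omega : ¬ p < K), dif_neg (by omega : ¬ p - K < 0)]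
        norm_num
    rw [key s, key s', H i hi]
  | succ m ih =>
    rw [W_peel K m hK, W_peel K m hK]
    apply Finset.sum_congr rfl
    intro b _
    rw [H 0 (by omega)]
    congr 1
    apply ih
    intro i hi
    rw [SP_shiftb K hK b s hi, SP_shiftb K hK b s' hi]
    by_cases h : i + 1 < K
    · rw [H (i+1) h]
    · have : i + 1 = K := by omega
      rw [this, SP, SP, Finset.Ico_self, Finset.prod_empty, Finset.prod_empty]


lemma SP_K (K : ℕ) (s : ℕ → ZMod 2) : SP K s K = 1 := by
  rw [SP, Finset.Ico_self, Finset.prod_empty]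

lemma sum_zmod2 (f : ZMod 2 → ℤ) : ∑ b : ZMod 2, f b = f 0 + f 1 := by
  rw [univ_zmod2, Finset.sum_insert (by decide), Finset.sum_singleton]

lemma shiftb_zero_inv (K : ℕ) (hK : 1 ≤ K) (m : ℕ) (s te : ℕ → ZMod 2) :
    W K m (shiftb K 0 s) te = W K m (cap K 0) te := by
  apply W_inv K hK m _ _ _
  intro i hi
  rw [SP_shiftb K hK 0 s hi, CP K 0 hi, mul_zero,
    if_neg (by omega : ¬ K - 0 ≤ i)]

lemma W_cap_succ (K : ℕ) (hK : 1 ≤ K) (m j : ℕ) (hj : j < K) (te : ℕ → ZMod 2) :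
    W K (m+1) (cap K j) te = W K m (cap K 0) te + W K m (cap K (j+1)) te := by
  rw [W_peel K m hK, sum_zmod2]
  have hsp : SP K (cap K j) 0 = 0 := by
    rw [CP K j (by omega : 0 < K), if_neg (by omega : ¬ K - j ≤ 0)]
  rw [hsp]
  congr 1
  · rw [mul_zero, ZMod.val_zero, pow_zero, one_mul, shiftb_zero_inv K hK]
  · rw [zero_mul, ZMod.val_zero, pow_zero, one_mul]
    apply W_inv K hK m _ _ _
    intro i hi
    rw [SP_shiftb K hK 1 (cap K j) hi, mul_one]
    by_cases h : i + 1 < K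
    · rw [CP K j h, CP K (j+1) hi]
      by_cases h2 : K - j ≤ i + 1
      · rw [if_pos h2, if_pos (by omega : K - (j+1) ≤ i)]
      · rw [if_neg h2, if_neg (by omega : ¬ K - (j+1) ≤ i)]
    · have : i + 1 = K := by omega
      rw [this, SP_K, CP K (j+1) hi, if_pos (by omega : K - (j+1) ≤ i)]

lemma W_cap_top (K : ℕ) (hK : 1 ≤ K) (m : ℕ) (te : ℕ → ZMod 2) :
    W K (m+1) (cap K K) te = W K m (cap K 0) te - W K m (cap K K) te := by
  rw [W_peel K m hK, sum_zmod2]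
  have hsp : SP K (cap K K) 0 = 1 := by
    rw [CP K K (by omega : 0 < K), if_pos (by omega : K - K ≤ 0)]
  rw [hsp]
  have e1 : (1 : ZMod 2) * 0 = 0 := by decide
  have e2 : (1 : ZMod 2) * 1 = 1 := by decide
  rw [e1, e2, ZMod.val_zero, pow_zero, one_mul, ZMod.val_one, pow_one,
    shiftb_zero_inv K hK]
  have : W K m (shiftb K 1 (cap K K)) te = W K m (cap K K) te := by
    apply W_inv K hK m _ _ _
    intro i hi
    rw [SP_shiftb K hK 1 (cap K K) hi, mul_one, CP K K hi,
      if_pos (by omega : K - K ≤ i)]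
    by_cases h : i + 1 < K
    · rw [CP K K h, if_pos (by omega : K - K ≤ i + 1)]
    · have : i + 1 = K := by omega
      rw [this, SP_K]
  rw [this]
  ring

lemma sum_Icc2 (f : ℕ → ℤ) (K : ℕ) :
    ∑ l ∈ Finset.Icc 2 (K+1), f l = ∑ i ∈ Finset.range K, f (i+2) := by
  rw [← Finset.Ico_add_one_right_eq_Icc, Finset.sum_Ico_eq_sum_range]
  apply Finset.sum_congr (by congr 1 <;> omega)
  intro i _
  congr 1 <;> omega

section Seq
variable {K : ℕ} {u : ℕ → ℕ → ℤ}

lemma stepA (hK : 1 ≤ K)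
    (h1 : ∀ m j, j < K → u (m+1) j = u m 0 + u m (j+1)) :
    ∀ e, e ≤ K → ∀ m, e ≤ m →
      u m (K-e) = (∑ i ∈ Finset.range e, u (m-1-i) 0) + u (m-e) K := by
  intro e
  induction e with
  | zero =>
    intro _ m _
    simp
  | succ e ih =>
    intro he m hm
    obtain ⟨m', rfl⟩ : ∃ m', m = m'+1 := ⟨m-1, by omega⟩
    have hje : K - (e+1) < K := by omega
    rw [h1 m' (K-(e+1)) hje]
    have : K - (e+1) + 1 = K - e := by omega
    rw [this, ih (by omega) m' (by omega)]
    have e3 : ∑ i ∈ Finset.range (e+1), u (m'+1-1-i) 0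
        = u m' 0 + ∑ i ∈ Finset.range e, u (m'-1-i) 0 := by
      rw [Finset.sum_range_succ']
      have ha : ∀ i ∈ Finset.range e, u (m'+1-1-(i+1)) 0 = u (m'-1-i) 0 := by
        intro i _
        congr 1 <;> omega
      rw [Finset.sum_congr rfl ha]
      have hb : u (m'+1-1-0) 0 = u m' 0 := by congr 1 <;> omega
      rw [hb, add_comm]
    rw [e3]
    have : m' + 1 - (e+1) = m' - e := by omega
    rw [this]
    ring

lemma stepB (hK : 1 ≤ K)
    (h1 : ∀ m j, j < K → u (m+1) j = u m 0 + u m (j+1))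
    (h2 : ∀ m, u (m+1) K = u m 0 - u m K) :
    ∀ m, K+1 ≤ m → u m 0 = 2 * ∑ l ∈ Finset.Icc 2 (K+1), u (m-l) 0 := by
  intro m hm
  have hKK : K - K = 0 := by omega
  have A1 := stepA hK h1 K le_rfl m (by omega)
  have A2 := stepA hK h1 K le_rfl (m-1) (by omega)
  rw [hKK] at A1 A2
  have E2 : u (m-K) K = u (m-1-K) 0 - u (m-1-K) K := by
    have := h2 (m-K-1)
    have e : m - K - 1 + 1 = m - K := by omega
    rw [e] at this
    rw [this]
    congr 2 <;> omega
  -- rewrite A2's inner sum indices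
  have A2' : u (m-1) 0 = (∑ i ∈ Finset.range K, u (m-2-i) 0) + u (m-1-K) K := by
    rw [A2]
    have ha : ∀ i ∈ Finset.range K, u (m-1-1-i) 0 = u (m-2-i) 0 := by
      intro i _
      congr 1 <;> omega
    rw [Finset.sum_congr rfl ha]
  have hc : u (m-1-K) K = u (m-1) 0 - ∑ i ∈ Finset.range K, u (m-2-i) 0 := by
    rw [A2']; ring
  -- split the big sums
  obtain ⟨K', rfl⟩ : ∃ K', K = K'+1 := ⟨K-1, by omega⟩
  have s1 : ∑ i ∈ Finset.range (K'+1), u (m-1-i) 0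
      = u (m-1) 0 + ∑ i ∈ Finset.range K', u (m-2-i) 0 := by
    rw [Finset.sum_range_succ']
    have ha : ∀ i ∈ Finset.range K', u (m-1-(i+1)) 0 = u (m-2-i) 0 := by
      intro i _
      congr 1 <;> omega
    have hb : u (m-1-0) 0 = u (m-1) 0 := by congr 1 <;> omega
    rw [Finset.sum_congr rfl ha, hb, add_comm]
  have s2 : ∑ i ∈ Finset.range (K'+1), u (m-2-i) 0
      = (∑ i ∈ Finset.range K', u (m-2-i) 0) + u (m-1-(K'+1)) 0 := by
    rw [Finset.sum_range_succ]
    have hb : u (m-2-K') 0 = u (m-1-(K'+1)) 0 := by congr 1 <;> omega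
    rw [hb]
  have target : ∑ l ∈ Finset.Icc 2 (K'+1+1), u (m-l) 0
      = ∑ i ∈ Finset.range (K'+1), u (m-2-i) 0 := by
    rw [sum_Icc2 (fun l => u (m-l) 0) (K'+1)]
    apply Finset.sum_congr rfl
    intro i _
    congr 1 <;> omega
  linear_combination A1 + E2 + s1 - hc - s2 - 2*target

lemma stepC (hK : 1 ≤ K)
    (h1 : ∀ m j, j < K → u (m+1) j = u m 0 + u m (j+1))
    (h2 : ∀ m, u (m+1) K = u m 0 - u m K) :
    ∀ j, j ≤ K → ∀ m, K+1 ≤ m →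
      u m j = 2 * ∑ l ∈ Finset.Icc 2 (K+1), u (m-l) j := by
  intro j
  induction j with
  | zero => intro _ m hm; exact stepB hK h1 h2 m hm
  | succ j ih =>
    intro hj m hm
    have hjK : j < K := by omega
    have key : u m (j+1) = u (m+1) j - u m 0 := by
      rw [h1 m j hjK]; ring
    rw [key]
    have P1 : u (m+1) j = 2 * ∑ l ∈ Finset.Icc 2 (K+1), u (m+1-l) j :=
      ih (by omega) (m+1) (by omega)
    have P0 : u m 0 = 2 * ∑ l ∈ Finset.Icc 2 (K+1), u (m-l) 0 :=
      stepB hK h1 h2 m hm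
    rw [P1, P0, ← mul_sub]
    congr 1
    rw [← Finset.sum_sub_distrib]
    apply Finset.sum_congr rfl
    intro l hl
    simp only [Finset.mem_Icc] at hl
    have e : m + 1 - l = (m - l) + 1 := by omega
    rw [e, h1 (m-l) j hjK]
    ring
end Seq

lemma W_rec (K : ℕ) (hK : 1 ≤ K) (te : ℕ → ZMod 2) (j : ℕ) (hj : j ≤ K)
    (m : ℕ) (hm : K+1 ≤ m) :
    W K m (cap K j) te = 2 * ∑ l ∈ Finset.Icc 2 (K+1), W K (m-l) (cap K j) te := by
  have h1 : ∀ m j, j < K →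
      W K (m+1) (cap K j) te = W K m (cap K 0) te + W K m (cap K (j+1)) te :=
    fun m j hj => W_cap_succ K hK m j hj te
  have h2 : ∀ m, W K (m+1) (cap K K) te
      = W K m (cap K 0) te - W K m (cap K K) te :=
    fun m => W_cap_top K hK m te
  exact stepC (u := fun m j => W K m (cap K j) te) hK h1 h2 j hj m hm


lemma neg_one_pow_sum {ι : Type*} (s : Finset ι) (f : ι → ZMod 2) :
    (-1:ℤ)^((∑ i ∈ s, f i).val) = ∏ i ∈ s, (-1:ℤ)^((f i).val) := by
  classical
  induction s using Finset.induction with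
  | empty => simp
  | insert _ _ h ih =>
    rw [Finset.sum_insert h, Finset.prod_insert h, neg_one_pow_add, ih]

/-- split equivalence -/
def splitEquiv (K n : ℕ) (h : K ≤ n) :
    ((Fin K → ZMod 2) × (Fin (n-K) → ZMod 2)) ≃ (Fin n → ZMod 2) where
  toFun p := fun i => if hi : (i : ℕ) < K then p.1 ⟨i, hi⟩ else p.2 ⟨(i:ℕ) - K, by omega⟩
  invFun x := (fun a => x ⟨a, by omega⟩, fun b => x ⟨K + (b:ℕ), by omega⟩)
  left_inv p := by
    obtain ⟨t, u⟩ := p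
    refine Prod.ext ?_ ?_
    · funext a
      show (if hi : ((⟨(a:ℕ), by omega⟩ : Fin n) : ℕ) < K then _ else _) = t a
      rw [dif_pos (show ((⟨(a:ℕ), by omega⟩ : Fin n) : ℕ) < K from a.isLt)]
    · funext b
      show (if hi : ((⟨K + (b:ℕ), by omega⟩ : Fin n) : ℕ) < K then _ else _) = u b
      rw [dif_neg (show ¬ ((⟨K + (b:ℕ), by omega⟩ : Fin n) : ℕ) < K by simp)]
      have e : (⟨((⟨K + (b:ℕ), by omega⟩ : Fin n) : ℕ) - K,
          by have := b.isLt; show K + (b:ℕ) - K < n - K; omega⟩ : Fin (n-K)) = b := by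
        apply Fin.ext
        show K + (b:ℕ) - K = (b:ℕ)
        omega
      rw [e]
  right_inv x := by
    funext i
    by_cases hi : (i : ℕ) < K
    · show (if h' : (i:ℕ) < K then x ⟨(⟨(i:ℕ), h'⟩ : Fin K), _⟩ else _) = x i
      rw [dif_pos hi]
    · show (if h' : (i:ℕ) < K then _ else x ⟨K + ((⟨(i:ℕ) - K, by omega⟩ : Fin (n-K)) : ℕ), _⟩) = x i
      rw [dif_neg hi]
      have e : (⟨K + ((⟨(i:ℕ) - K, by omega⟩ : Fin (n-K)) : ℕ), by omega⟩ : Fin n) = i := by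
        apply Fin.ext
        show K + ((i:ℕ) - K) = (i:ℕ)
        omega
      rw [e]

lemma decomp (K n : ℕ) (hK : 1 ≤ K) (hn : K + 1 ≤ n) :
    boolExpSum n (rotMonomial (K+1) n) =
      ∑ t : Fin K → ZMod 2, W K (n-K) (extVar t) (extVar t) := by
  have hn0 : 0 < n := by omega
  rw [boolExpSum]
  have step1 : ∀ x : Fin n → ZMod 2,
      (-1:ℤ)^((rotMonomial (K+1) n x).val)
        = ∏ i ∈ Finset.range n,
            (-1:ℤ)^((∏ l ∈ Finset.range (K+1), extVar x ((i+l)%n)).val) := by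
    intro x
    rw [rotMonomial, neg_one_pow_sum]
  rw [Finset.sum_congr rfl (fun x _ => step1 x)]
  rw [← (splitEquiv K n (by omega)).sum_comp
    (fun x => ∏ i ∈ Finset.range n,
      (-1:ℤ)^((∏ l ∈ Finset.range (K+1), extVar x ((i+l)%n)).val))]
  rw [Fintype.sum_prod_type]
  apply Finset.sum_congr rfl
  intro t _
  rw [W]
  apply Finset.sum_congr rfl
  intro u _
  rw [wt]
  have hmn : n - K + K = n := by omega
  rw [hmn]
  apply Finset.prod_congr rfl
  intro i hi
  simp only [Finset.mem_range] at hi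
  congr 1
  congr 1
  apply Finset.prod_congr rfl
  intro l hl
  simp only [Finset.mem_range] at hl
  have hl' : l ≤ K := by omega
  -- per-factor equality
  by_cases hc : i + l < n
  · rw [Nat.mod_eq_of_lt hc]
    rw [extVar]
    rw [dif_pos hc]
    by_cases hq : i + l < K
    · simp only [splitEquiv, Equiv.coe_fn_mk]
      rw [dif_pos hq]
      rw [glue]
      rw [dif_pos hq]
      rw [extVar, dif_pos (by omega : i + l < K)]
    · simp only [splitEquiv, Equiv.coe_fn_mk]
      rw [dif_neg hq]
      rw [glue]
      rw [dif_neg hq, dif_pos (by omega : i + l - K < n - K)]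
  · have h2n : i + l - n < n := by omega
    have hmod : (i + l) % n = i + l - n := by
      rw [Nat.mod_eq_sub_mod (by omega), Nat.mod_eq_of_lt h2n]
    rw [hmod, extVar, dif_pos h2n]
    have hqK : i + l - n < K := by omega
    simp only [splitEquiv, Equiv.coe_fn_mk]
    rw [dif_pos hqK]
    rw [glue]
    rw [dif_neg (by omega : ¬ i + l < K),
      dif_neg (by omega : ¬ i + l - K < n - K)]
    rw [extVar, dif_pos (by omega : i + l - K - (n-K) < K)]
    congr 1
    apply Fin.ext
    show i + l - n = i + l - K - (n - K)
    omega


end RotRec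

/-- For every `k ≥ 2` the sequence `{S(R_{2,3,…,k}(n))}` satisfies the homogeneous
linear recurrence with characteristic polynomial `p_k(X) = X^k − 2(X^{k−2} + ⋯ + X + 1)`,
i.e. `S(R_{2,…,k}(n)) = 2 (S(R_{2,…,k}(n−2)) + ⋯ + S(R_{2,…,k}(n−k)))` for `n ≥ 2k`. -/
theorem rotation_expSum_linear_recurrence (k : ℕ) (hk : 2 ≤ k) (n : ℕ) (hn : 2 * k ≤ n) :
    boolExpSum n (rotMonomial k n) =
      2 * ∑ l ∈ Finset.Icc 2 k, boolExpSum (n - l) (rotMonomial k (n - l)) := by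
  obtain ⟨K, rfl⟩ : ∃ K, k = K + 1 := ⟨k-1, by omega⟩
  have hK : 1 ≤ K := by omega
  rw [RotRec.decomp K n hK (by omega)]
  have step : ∀ t : Fin K → ZMod 2,
      RotRec.W K (n-K) (extVar t) (extVar t)
        = 2 * ∑ l ∈ Finset.Icc 2 (K+1),
            RotRec.W K ((n-l)-K) (extVar t) (extVar t) := by
    intro t
    have h1 : RotRec.W K (n-K) (extVar t) (extVar t)
        = RotRec.W K (n-K) (RotRec.cap K (RotRec.rho K (extVar t))) (extVar t) :=
      RotRec.W_inv K hK _ _ _ _ (fun i hi => RotRec.rho_spec K (extVar t) hi)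
    rw [h1, RotRec.W_rec K hK (extVar t) _ (RotRec.rho_le K _) (n-K) (by omega)]
    congr 1
    apply Finset.sum_congr rfl
    intro l hl
    simp only [Finset.mem_Icc] at hl
    have e : n - K - l = n - l - K := by omega
    rw [e]
    exact (RotRec.W_inv K hK _ _ _ _
      (fun i hi => RotRec.rho_spec K (extVar t) hi)).symm
  rw [Finset.sum_congr rfl (fun t _ => step t)]
  rw [← Finset.mul_sum, Finset.sum_comm]
  congr 1
  apply Finset.sum_congr rfl
  intro l hl
  simp only [Finset.mem_Icc] at hl
  exact (RotRec.decomp K (n-l) hK (by omega)).symm
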